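/- Let G = (V,E) be a simple cubic graph and let M̄(G) be the (|V|+3)×(|E|+6) binary matrix associated with G. Then G is 3-edge-colorable if and only if η̄(M̄(G)) ≤ |E|+3. -/

import Mathlib

/-! Common definitions: binary matrices, conflicts, row splits, conflict graphs,
containment, transitive orientations. -/

namespace MPP

variable {α β : Type*}

/-- Columns `i` and `j` of the binary matrix `M` are in conflict. -/
def InConflict (M : α → β → Bool) (i j : β) : Prop :=
  ∃ r r' r'' : α, M r i = true ∧ M r j = true ∧ M r' i = false ∧ M r' j = true ∧
    M r'' i = true ∧ M r'' j = false

theorem InConflict.symm {M : α → β → Bool} {i j : β} (h : InConflict M i j) :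
    InConflict M j i := by
  obtain ⟨r, r', r'', h1, h2, h3, h4, h5, h6⟩ := h
  exact ⟨r, r'', r', h2, h1, h6, h5, h4, h3⟩

theorem InConflict.ne {M : α → β → Bool} {i j : β} (h : InConflict M i j) : i ≠ j := by
  rintro rfl
  obtain ⟨r, r', r'', _, _, h3, h4, _, _⟩ := h
  rw [h3] at h4
  exact Bool.false_ne_true h4

/-- A binary matrix is conflict-free if no two of its columns are in conflict. -/
def ConflictFree (M : α → β → Bool) : Prop := ∀ i j : β, ¬ InConflict M i j

/-- Column `i` of `M` is contained in column `j`. -/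
def Contained (M : α → β → Bool) (i j : β) : Prop :=
  ∀ k : α, M k i = true → M k j = true

instance {α β : Type*} [Fintype α] (M : α → β → Bool) (i j : β) :
    Decidable (Contained M i j) :=
  inferInstanceAs (Decidable (∀ k : α, M k i = true → M k j = true))

/-- The conflict graph of a binary matrix `M`: vertices are all columns,
adjacent iff in conflict. -/
def conflictGraphAll (M : α → β → Bool) : SimpleGraph β where
  Adj i j := InConflict M i j
  symm := ⟨fun _ _ h => h.symm⟩
  loopless := ⟨fun _ h => h.ne rfl⟩

/-- The conflict graph `G_{M,r}`: vertices are the columns with a `1` in row `r`,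
adjacent iff the corresponding columns of `M` are in conflict. -/
def conflictGraph (M : α → β → Bool) (r : α) : SimpleGraph {j : β // M r j = true} where
  Adj a b := InConflict M a.1 b.1
  symm := ⟨fun _ _ h => h.symm⟩
  loopless := ⟨fun _ h => h.ne rfl⟩

/-- `M'` is a row split of `M` via the assignment `f` sending each row of `M'` to the row
of `M` it splits: each row `i` of `M` is the bitwise OR of the rows of `M'` mapped to `i`. -/
def IsRowSplit {α' : Type*} (M : α → β → Bool) (M' : α' → β → Bool) (f : α' → α) : Prop :=
  ∀ (i : α) (j : β), M i j = true ↔ ∃ k : α', f k = i ∧ M' k j = true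

/-- `γ̄(M)`: the minimum number of rows of a conflict-free row split of `M`. -/
noncomputable def gammaBar (M : α → β → Bool) : ℕ :=
  sInf {k : ℕ | ∃ (M' : Fin k → β → Bool) (f : Fin k → α),
    IsRowSplit M M' f ∧ ConflictFree M'}

/-- `η̄(M)`: the minimum number of pairwise distinct rows of a conflict-free row split of `M`. -/
noncomputable def etaBar (M : α → β → Bool) : ℕ :=
  sInf {d : ℕ | ∃ (k : ℕ) (M' : Fin k → β → Bool) (f : Fin k → α),
    IsRowSplit M M' f ∧ ConflictFree M' ∧ Nat.card (Set.range M') = d}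

/-- `o` is a transitive orientation of the graph `G`: it assigns to each edge `{u,v}`
exactly one of `(u,v)`, `(v,u)`, and is transitive. -/
def IsTransitiveOrientation {V : Type*} (G : SimpleGraph V) (o : V → V → Prop) : Prop :=
  (∀ u v, o u v → G.Adj u v) ∧
  (∀ u v, G.Adj u v → (o u v ↔ ¬ o v u)) ∧
  (∀ u v w, o u v → o v w → o u w)

/-- A graph is transitively orientable if it admits a transitive orientation. -/
def TransitivelyOrientable {V : Type*} (G : SimpleGraph V) : Prop :=
  ∃ o : V → V → Prop, IsTransitiveOrientation G o

/-- The undirected containment graph `H_M`: vertices are the columns of `M`, two distinct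
columns adjacent iff one is contained in the other. -/
def containmentGraph (M : α → β → Bool) : SimpleGraph β where
  Adj i j := i ≠ j ∧ (Contained M i j ∨ Contained M j i)
  symm := ⟨fun _ _ h => ⟨h.1.symm, h.2.symm⟩⟩
  loopless := ⟨fun _ h => h.1 rfl⟩

/-- In the directed containment graph `H⃗_{M,r}` (on the columns with a `1` in row `r`,
with an arc from `c_i` to `c_j` iff `i ≠ j` and `c_i` is contained in `c_j`),
the vertex `j` is a source, i.e., has no incoming arc. -/
def IsSourceCol (M : α → β → Bool) (r : α) (j : {c : β // M r c = true}) : Prop :=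
  ∀ i : {c : β // M r c = true}, i ≠ j → ¬ Contained M i.1 j.1

/-- `σ(M,r)`: the number of sources of the directed containment graph `H⃗_{M,r}`. -/
noncomputable def sigmaMr (M : α → β → Bool) (r : α) : ℕ :=
  Nat.card {j : {c : β // M r c = true} // IsSourceCol M r j}

end MPP

namespace MPP

/-- A set of edges is a matching if its elements are pairwise disjoint. -/
def IsMatchingSet {V : Type*} (s : Set (Sym2 V)) : Prop :=
  ∀ e ∈ s, ∀ f ∈ s, e ≠ f → ∀ v : V, ¬ (v ∈ e ∧ v ∈ f)

/-- A graph is 3-edge-colorable if its edge set can be partitioned into three matchings. -/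
def ThreeEdgeColorable {V : Type*} (G : SimpleGraph V) : Prop :=
  ∃ E₁ E₂ E₃ : Set (Sym2 V), E₁ ∪ E₂ ∪ E₃ = G.edgeSet ∧
    Disjoint E₁ E₂ ∧ Disjoint E₁ E₃ ∧ Disjoint E₂ E₃ ∧
    IsMatchingSet E₁ ∧ IsMatchingSet E₂ ∧ IsMatchingSet E₃

/-- The `(|V|+3) × (|E|+3)` binary matrix `M(G)` associated with a graph `G`, with rows indexed
by `V ∪ {r₁,r₂,r₃}` and columns indexed by `E ∪ {c₁,c₂,c₃}`. -/
def Mcubic {V : Type*} [DecidableEq V] (G : SimpleGraph V) :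
    (V ⊕ Fin 3) → (↥G.edgeSet ⊕ Fin 3) → Bool
  | Sum.inl v, Sum.inl e => decide (v ∈ (e : Sym2 V))
  | Sum.inl _, Sum.inr _ => true
  | Sum.inr _, Sum.inl _ => false
  | Sum.inr i, Sum.inr j => decide (i = j)

end MPP

namespace MPP

/-- The `(|V|+3) × (|E|+6)` binary matrix `M̄(G)`, with rows indexed by `V ∪ {r₁,r₂,r₃}` and
columns indexed by `E ∪ {c₁,c₂,c₃} ∪ {d₁,d₂,d₃}`. -/
def McubicBar {V : Type*} [DecidableEq V] (G : SimpleGraph V) :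
    (V ⊕ Fin 3) → (↥G.edgeSet ⊕ Fin 3 ⊕ Fin 3) → Bool
  | Sum.inl v, Sum.inl e => decide (v ∈ (e : Sym2 V))
  | Sum.inl _, Sum.inr (Sum.inl _) => true
  | Sum.inl _, Sum.inr (Sum.inr _) => false
  | Sum.inr _, Sum.inl _ => false
  | Sum.inr i, Sum.inr (Sum.inl j) => decide (i = j)
  | Sum.inr i, Sum.inr (Sum.inr j) => decide (i = j)

/-! A proper 3-edge-coloring `c` yields a conflict-free row split of `M̄(G)` with `|E| + 3`
distinct rows: the row of an edge `e` has its `1`s at `e` and `c_{c e}`, each vertex row is split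
into the rows of its three edges (which carry the three colors), and the rows `r_i` stay whole.

Conversely, in a conflict-free row split the edge columns and the columns `d_i` are pairwise
exclusive: two edge columns are incomparable in `M̄(G)`, and `d_i` lives only in row `r_i`. With at
most `|E| + 3` distinct rows, each row is then determined by the one such column it meets. So all
split rows through an edge `e` coincide, and as the columns `c_j` are pairwise incomparable too,
this row carries at most one `c_j`, the color of `e`. Every vertex row needs all three `c_j`, which
in a cubic graph forces distinct colors on its three edges. -/

open Function Sum

section RowSplit

variable {α α' β ι : Type*} {M : α → β → Bool} {M' : α' → β → Bool} {f : α' → α}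

theorem ConflictFree.comp (hM : ConflictFree M) (g : α' → α) : ConflictFree (M ∘ g) :=
  fun i j ⟨r, r', r'', h⟩ => hM i j ⟨g r, g r', g r'', h⟩

theorem conflictFree_of_laminar
    (h : ∀ i j, Contained M i j ∨ Contained M j i ∨ ∀ r, M r i = true → M r j = false) :
    ConflictFree M := by
  rintro i j ⟨r, r', r'', hri, hrj, hr'i, hr'j, hr''i, hr''j⟩
  rcases h i j with hij | hji | hdisj
  · simp [hij r'' hr''i] at hr''j
  · simp [hji r' hr'j] at hr'i
  · simp [hdisj r hri] at hrj

theorem IsRowSplit.apply_eq_true (hs : IsRowSplit M M' f) {k : α'} {j : β}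
    (h : M' k j = true) : M (f k) j = true :=
  (hs (f k) j).2 ⟨k, rfl, h⟩

theorem IsRowSplit.exists_apply_eq_true (hs : IsRowSplit M M' f) {i : α} {j : β}
    (h : M i j = true) : ∃ k, f k = i ∧ M' k j = true :=
  (hs i j).1 h

/-- Columns that are incomparable in `M` have disjoint supports in any conflict-free row split:
a row of the split meeting both would be in conflict with the rows witnessing incomparability. -/
theorem IsRowSplit.apply_eq_false_of_not_contained (hs : IsRowSplit M M' f)
    (hcf : ConflictFree M') {i j : β} (hij : ¬ Contained M i j) (hji : ¬ Contained M j i)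
    {k : α'} (hki : M' k i = true) : M' k j = false := by
  have witness : ∀ {a b : β}, ¬ Contained M a b → ∃ y, M' y a = true ∧ M' y b = false := by
    intro a b hab
    obtain ⟨r, hra, hrb⟩ : ∃ r, M r a = true ∧ M r b = false := by
      simpa [Contained] using hab
    obtain ⟨y, rfl, hya⟩ := hs.exists_apply_eq_true hra
    refine ⟨y, hya, ?_⟩
    by_contra hyb
    simp [hs.apply_eq_true (Bool.not_eq_false _ ▸ hyb)] at hrb
  obtain ⟨y, hyi, hyj⟩ := witness hij
  obtain ⟨y', hy'j, hy'i⟩ := witness hji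
  by_contra hkj
  exact hcf i j ⟨k, y', y, hki, Bool.not_eq_false _ ▸ hkj, hy'i, hy'j, hyi, hyj⟩

theorem IsRowSplit.exists_fin (hs : IsRowSplit M M' f) (hcf : ConflictFree M') [Finite α'] :
    ∃ (k : ℕ) (M'' : Fin k → β → Bool) (f' : Fin k → α),
      IsRowSplit M M'' f' ∧ ConflictFree M'' ∧
        Nat.card (Set.range M'') = Nat.card (Set.range M') := by
  have := Fintype.ofFinite α'
  let e := (Fintype.equivFin α').symm
  refine ⟨Fintype.card α', M' ∘ e, f ∘ e, fun i j => ?_, hcf.comp e, ?_⟩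
  · rw [hs i j, ← e.exists_congr_right]
    simp
  · rw [Set.range_comp, Equiv.range_eq_univ, Set.image_univ]

theorem etaBar_le_card_range [Finite α'] (hs : IsRowSplit M M' f) (hcf : ConflictFree M') :
    etaBar M ≤ Nat.card (Set.range M') :=
  Nat.sInf_le (hs.exists_fin hcf)

theorem exists_isRowSplit_card_range_eq_etaBar [Finite α] [Finite β] (M : α → β → Bool) :
    ∃ (k : ℕ) (M' : Fin k → β → Bool) (f : Fin k → α),
      IsRowSplit M M' f ∧ ConflictFree M' ∧ Nat.card (Set.range M') = etaBar M := by
  classical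
  -- nonempty: the split into one row per `1`-entry is conflict-free
  let S : α × β → β → Bool := fun p j => decide (p.2 = j) && M p.1 p.2
  have hs : IsRowSplit M S Prod.fst := fun i j => by
    refine ⟨fun h => ⟨(i, j), rfl, by simp [S, h]⟩, ?_⟩
    rintro ⟨⟨a, b⟩, rfl, hk⟩
    simp only [S, Bool.and_eq_true, decide_eq_true_eq] at hk
    exact hk.1 ▸ hk.2
  have hcf : ConflictFree S := conflictFree_of_laminar fun i j => by
    by_cases hij : i = j
    · exact Or.inl (hij ▸ fun _ h => h)
    · refine Or.inr (Or.inr fun r hi => ?_)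
      simp only [S, Bool.and_eq_true, decide_eq_true_eq] at hi
      simp [S, hi.1, hij]
  exact (Nat.sInf_mem ⟨_, hs.exists_fin hcf⟩ : etaBar M ∈ _)

theorem rows_determined_of_card_range_le [Finite α'] [Finite ι]
    (cols : ι → β) (hexcl : ∀ a b k, M' k (cols a) = true → M' k (cols b) = true → a = b)
    (hne : ∀ a, ∃ k, M' k (cols a) = true) (hcard : Nat.card (Set.range M') ≤ Nat.card ι) :
    (∀ x, ∃ a, M' x (cols a) = true) ∧
      ∀ a x y, M' x (cols a) = true → M' y (cols a) = true → M' x = M' y := by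
  choose sel hsel using hne
  have hbij : Bijective fun a => (⟨M' (sel a), sel a, rfl⟩ : Set.range M') := by
    refine Injective.bijective_of_nat_card_le (fun a b hab => ?_) hcard
    have hab : M' (sel a) = M' (sel b) := congrArg Subtype.val hab
    exact hexcl _ _ _ (hsel a) (hab ▸ hsel b)
  have hrow : ∀ x, ∃ a, M' (sel a) = M' x := fun x =>
    (hbij.2 ⟨M' x, x, rfl⟩).imp fun _ h => congrArg Subtype.val h
  have huniq : ∀ a x, M' x (cols a) = true → M' x = M' (sel a) := by
    intro a x hx
    obtain ⟨b, hb⟩ := hrow x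
    rw [← hb] at hx ⊢
    rw [hexcl _ _ _ hx (hsel b)]
  refine ⟨fun x => ?_, fun a x y hx hy => (huniq a x hx).trans (huniq a y hy).symm⟩
  obtain ⟨a, ha⟩ := hrow x
  exact ⟨a, ha ▸ hsel a⟩

end RowSplit

section EdgeColoring

variable {V : Type*} {G : SimpleGraph V}

theorem threeEdgeColorable_iff_colorable_lineGraph :
    ThreeEdgeColorable G ↔ G.lineGraph.Colorable 3 := by
  classical
  constructor
  · rintro ⟨E₁, E₂, E₃, hU, -, -, -, m₁, m₂, m₃⟩
    let c : G.edgeSet → Fin 3 := fun e => if e.1 ∈ E₁ then 0 else if e.1 ∈ E₂ then 1 else 2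
    have hc : ∀ e : G.edgeSet, (c e = 0 → e.1 ∈ E₁) ∧ (c e = 1 → e.1 ∈ E₂) ∧
        (c e = 2 → e.1 ∈ E₃) := by
      intro e
      have he : e.1 ∈ E₁ ∪ E₂ ∪ E₃ := by rw [hU]; exact e.2
      rcases he with (h | h) | h <;> simp only [c] <;> split_ifs <;> simp_all
    refine ⟨SimpleGraph.Coloring.mk c fun {e e'} hadj hce => ?_⟩
    obtain ⟨hne, v, hv, hv'⟩ := SimpleGraph.lineGraph_adj_iff_exists.1 hadj
    have hne : e.1 ≠ e'.1 := Subtype.coe_ne_coe.2 hne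
    obtain ⟨h₁, h₂, h₃⟩ := hc e
    obtain ⟨h₁', h₂', h₃'⟩ := hc e'
    rcases (by omega : ∀ j : Fin 3, j = 0 ∨ j = 1 ∨ j = 2) (c e) with h | h | h
    · exact m₁ _ (h₁ h) _ (h₁' (hce ▸ h)) hne v ⟨hv, hv'⟩
    · exact m₂ _ (h₂ h) _ (h₂' (hce ▸ h)) hne v ⟨hv, hv'⟩
    · exact m₃ _ (h₃ h) _ (h₃' (hce ▸ h)) hne v ⟨hv, hv'⟩
  · rintro ⟨c⟩
    let E : Fin 3 → Set (Sym2 V) := fun j => {s | ∃ h : s ∈ G.edgeSet, c ⟨s, h⟩ = j}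
    have hdisj : ∀ i j, i ≠ j → Disjoint (E i) (E j) := fun i j hij =>
      Set.disjoint_left.2 fun s ⟨_, hi⟩ ⟨_, hj⟩ => hij (hi ▸ hj)
    have hmatch : ∀ j, IsMatchingSet (E j) := by
      rintro j s ⟨hs, hcs⟩ t ⟨ht, hct⟩ hst v hv
      exact c.valid (SimpleGraph.lineGraph_adj_iff_exists.2
        ⟨fun h => hst (congrArg Subtype.val h), v, hv⟩) (hcs.trans hct.symm)
    refine ⟨E 0, E 1, E 2, ?_, hdisj 0 1 (by decide), hdisj 0 2 (by decide),
      hdisj 1 2 (by decide), hmatch 0, hmatch 1, hmatch 2⟩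
    ext s
    simp only [Set.mem_union, E, Set.mem_ofPred_eq]
    refine ⟨by rintro ((⟨h, -⟩ | ⟨h, -⟩) | ⟨h, -⟩) <;> exact h, fun h => ?_⟩
    rcases (by omega : ∀ j : Fin 3, j = 0 ∨ j = 1 ∨ j = 2) (c ⟨s, h⟩) with hj | hj | hj
    exacts [Or.inl (Or.inl ⟨h, hj⟩), Or.inl (Or.inr ⟨h, hj⟩), Or.inr ⟨h, hj⟩]

theorem exists_mem_not_mem_of_ne {e e' : Sym2 V} (he : ¬ e.IsDiag) (hne : e ≠ e') :
    ∃ w ∈ e, w ∉ e' := by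
  induction e using Sym2.ind with
  | _ a b =>
    by_contra! h
    exact hne ((Sym2.mem_and_mem_iff (by simpa using he)).1
      ⟨h a (Sym2.mem_mk_left a b), h b (Sym2.mem_mk_right a b)⟩).symm

variable [Fintype V] [DecidableEq V] [DecidableRel G.Adj]

theorem nat_card_incident_eq_degree (v : V) :
    Nat.card {e : G.edgeSet // v ∈ (e : Sym2 V)} = G.degree v := by
  rw [← G.card_incidenceSet_eq_degree, ← Nat.card_eq_fintype_card]
  exact Nat.card_congr
    { toFun := fun e => ⟨e.1.1, e.1.2, e.2⟩
      invFun := fun e => ⟨⟨e.1, e.2.1⟩, e.2.2⟩ }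

theorem exists_incident_coloring_eq {d : ℕ} (hdeg : ∀ v, G.degree v = d)
    (c : G.lineGraph.Coloring (Fin d)) (v : V) (j : Fin d) :
    ∃ e : G.edgeSet, v ∈ (e : Sym2 V) ∧ c e = j := by
  have hinj : Injective fun e : {e : G.edgeSet // v ∈ (e : Sym2 V)} => c e.1 := by
    intro e e' hc
    by_contra hne
    exact c.valid (SimpleGraph.lineGraph_adj_iff_exists.2
      ⟨fun h => hne (Subtype.ext h), v, e.2, e'.2⟩) hc
  obtain ⟨e, he⟩ := (hinj.bijective_of_nat_card_le
    (by rw [Nat.card_fin, nat_card_incident_eq_degree, hdeg])).2 j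
  exact ⟨e.1, e.2, he⟩

theorem colorable_lineGraph_of_exists_incident {d : ℕ} (hdeg : ∀ v, G.degree v = d)
    (R : G.edgeSet → Fin d → Prop) (hR : ∀ e i j, R e i → R e j → i = j)
    (hex : ∀ v j, ∃ e : G.edgeSet, v ∈ (e : Sym2 V) ∧ R e j) : G.lineGraph.Colorable d := by
  choose σ hσv hσR using hex
  -- the `d` edges picked at a vertex, one per color, are distinct, hence all of its edges
  have hσ : ∀ v, Surjective fun j => (⟨σ v j, hσv v j⟩ : {e : G.edgeSet // v ∈ (e : Sym2 V)}) :=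
    fun v => (Injective.bijective_of_nat_card_le
      (fun i j hij => hR _ _ _ (hσR v i) (by rw [Subtype.mk.inj hij]; exact hσR v j))
      (by rw [Nat.card_fin, nat_card_incident_eq_degree, hdeg])).2
  have hcolor : ∀ v (e : G.edgeSet), v ∈ (e : Sym2 V) → ∃ j, σ v j = e ∧ R e j := fun v e hv =>
    (hσ v ⟨e, hv⟩).imp fun j hj => by
      have hj : σ v j = e := congrArg Subtype.val hj
      exact ⟨hj, hj ▸ hσR v j⟩
  choose c hc using fun e : G.edgeSet => (hcolor _ e (Sym2.out_fst_mem e.1)).imp fun _ => And.right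
  refine ⟨SimpleGraph.Coloring.mk c fun {e e'} hadj hce => ?_⟩
  obtain ⟨hne, v, hv, hv'⟩ := SimpleGraph.lineGraph_adj_iff_exists.1 hadj
  obtain ⟨j, rfl, hj⟩ := hcolor v e hv
  obtain ⟨j', rfl, hj'⟩ := hcolor v e' hv'
  rw [hR _ _ _ hj (hc _), hR _ _ _ hj' (hc _), hce] at hne
  exact hne rfl

end EdgeColoring

section McubicBar

variable {V : Type*} [DecidableEq V] {G : SimpleGraph V}

def coloringRows (c : G.edgeSet → Fin 3) : G.edgeSet ⊕ Fin 3 → G.edgeSet ⊕ Fin 3 ⊕ Fin 3 → Bool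
  | inl e, inl e' => decide (e' = e)
  | inl e, inr (inl j) => decide (c e = j)
  | inl _, inr (inr _) => false
  | inr i, col => McubicBar G (inr i) col

theorem conflictFree_coloringRows (c : G.edgeSet → Fin 3) : ConflictFree (coloringRows c) := by
  -- the column supports `{e}`, `c⁻¹(j) ∪ {r_j}` and `{r_j}` form a laminar family
  refine conflictFree_of_laminar ?_
  rintro (e | j | j) (e' | j' | j') <;>
    simp [Contained, coloringRows, McubicBar, Sum.forall] <;> grind

theorem isRowSplit_coloringRows (c : G.edgeSet → Fin 3)
    (hc : ∀ v j, ∃ e : G.edgeSet, v ∈ (e : Sym2 V) ∧ c e = j) :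
    IsRowSplit (McubicBar G)
      (coloringRows c ∘ Sum.map (fun p : {p : V × G.edgeSet // p.1 ∈ (p.2 : Sym2 V)} => p.1.2) id)
      (Sum.map (fun p => p.1.1) id) := by
  rintro (v | i) (e | j | j) <;>
    simp [coloringRows, McubicBar, Sum.exists]
  obtain ⟨e, hv, rfl⟩ := hc v j
  exact ⟨e, hv, e.2, rfl⟩

theorem etaBar_le_of_colorable [Fintype V] [DecidableRel G.Adj] (hdeg : ∀ v, G.degree v = 3)
    (h : G.lineGraph.Colorable 3) : etaBar (McubicBar G) ≤ Nat.card G.edgeSet + 3 := by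
  obtain ⟨c⟩ := h
  calc etaBar (McubicBar G)
      ≤ Nat.card (Set.range (coloringRows c ∘ Sum.map
          (fun p : {p : V × G.edgeSet // p.1 ∈ (p.2 : Sym2 V)} => p.1.2) id)) :=
        etaBar_le_card_range (isRowSplit_coloringRows c (exists_incident_coloring_eq hdeg c))
          ((conflictFree_coloringRows c).comp _)
    _ ≤ Nat.card (Set.range (coloringRows c)) :=
        Nat.card_mono (Set.finite_range _) (Set.range_comp_subset_range _ _)
    _ ≤ Nat.card (G.edgeSet ⊕ Fin 3) := Finite.card_range_le _
    _ = Nat.card G.edgeSet + 3 := by simp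

theorem McubicBar_inr_inr_eq_true {r : V ⊕ Fin 3} {i : Fin 3} :
    McubicBar G r (inr (inr i)) = true ↔ r = inr i := by
  rcases r with v | j <;> simp [McubicBar]

theorem not_contained_McubicBar_inl {e e' : G.edgeSet} (hne : e ≠ e') :
    ¬ Contained (McubicBar G) (inl e) (inl e') := fun h => by
  obtain ⟨w, hw, hw'⟩ :=
    exists_mem_not_mem_of_ne (G.not_isDiag_of_mem_edgeSet e.2) (Subtype.coe_ne_coe.2 hne)
  simpa [McubicBar, hw, hw'] using h (inl w)

theorem not_contained_McubicBar_inr_inl {i j : Fin 3} (hne : i ≠ j) :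
    ¬ Contained (McubicBar G) (inr (inl i)) (inr (inl j)) := fun h => by
  simpa [McubicBar, hne] using h (inr i)

variable {α' : Type*} {M' : α' → G.edgeSet ⊕ Fin 3 ⊕ Fin 3 → Bool} {f : α' → V ⊕ Fin 3}

theorem IsRowSplit.McubicBar_eq_of_apply_eq_true (hs : IsRowSplit (McubicBar G) M' f)
    (hcf : ConflictFree M') (a b : G.edgeSet ⊕ Fin 3) (k : α')
    (ha : M' k (Sum.map id inr a) = true)
    (hb : M' k (Sum.map id inr b) = true) : a = b := by
  rcases a with e | i <;> rcases b with e' | i' <;> simp only [map_inl, map_inr, id] at ha hb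
  · by_contra hne
    have hne : e ≠ e' := fun h => hne (congrArg inl h)
    simp [hs.apply_eq_false_of_not_contained hcf (not_contained_McubicBar_inl hne)
      (not_contained_McubicBar_inl hne.symm) ha] at hb
  · simpa [McubicBar_inr_inr_eq_true.1 (hs.apply_eq_true hb), McubicBar] using hs.apply_eq_true ha
  · simpa [McubicBar_inr_inr_eq_true.1 (hs.apply_eq_true ha), McubicBar] using hs.apply_eq_true hb
  · simpa [McubicBar_inr_inr_eq_true.1 (hs.apply_eq_true ha)] using
      McubicBar_inr_inr_eq_true.1 (hs.apply_eq_true hb)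

theorem colorable_of_isRowSplit [Fintype V] [DecidableRel G.Adj] [Finite α']
    (hdeg : ∀ v, G.degree v = 3) (hs : IsRowSplit (McubicBar G) M' f) (hcf : ConflictFree M')
    (hcard : Nat.card (Set.range M') ≤ Nat.card G.edgeSet + 3) : G.lineGraph.Colorable 3 := by
  have hne : ∀ a, ∃ k, M' k (Sum.map id inr a) = true := by
    rintro (e | i)
    · obtain ⟨k, -, hk⟩ := hs.exists_apply_eq_true (i := inl e.1.out.1) (j := inl e)
        (by simp [McubicBar, Sym2.out_fst_mem])
      exact ⟨k, hk⟩
    · obtain ⟨k, -, hk⟩ := hs.exists_apply_eq_true (i := inr i) (j := inr (inr i))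
        (by simp [McubicBar])
      exact ⟨k, hk⟩
  obtain ⟨hmeet, huniq⟩ :=
    rows_determined_of_card_range_le _ (hs.McubicBar_eq_of_apply_eq_true hcf) hne
      (by simpa using hcard)
  refine colorable_lineGraph_of_exists_incident hdeg
    (fun e j => ∃ x, M' x (inl e) = true ∧ M' x (inr (inl j)) = true) ?_ ?_
  · rintro e i j ⟨x, hxe, hxi⟩ ⟨y, hye, hyj⟩
    by_contra hij
    have hxj : M' x (inr (inl j)) = false := hs.apply_eq_false_of_not_contained hcf
      (not_contained_McubicBar_inr_inl hij) (not_contained_McubicBar_inr_inl (Ne.symm hij)) hxi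
    simp [huniq (inl e) x y hxe hye, hyj] at hxj
  · intro v j
    obtain ⟨x, hxv, hxj⟩ := hs.exists_apply_eq_true (i := inl v) (j := inr (inl j)) rfl
    obtain ⟨e | i, ha⟩ := hmeet x
    · exact ⟨e, by simpa [hxv, McubicBar] using hs.apply_eq_true ha, x, ha, hxj⟩
    · simpa [hxv] using McubicBar_inr_inr_eq_true.1 (hs.apply_eq_true ha)

end McubicBar

/-- A simple cubic graph `G` is 3-edge-colorable iff `η̄(M̄(G)) ≤ |E|+3`. -/
theorem stmt_16 {V : Type*} [Fintype V] [DecidableEq V] (G : SimpleGraph V)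
    [DecidableRel G.Adj] (hcubic : ∀ v : V, G.degree v = 3) :
    ThreeEdgeColorable G ↔ etaBar (McubicBar G) ≤ Nat.card ↥G.edgeSet + 3 := by
  rw [threeEdgeColorable_iff_colorable_lineGraph]
  refine ⟨etaBar_le_of_colorable hcubic, fun h => ?_⟩
  obtain ⟨_, M', f, hs, hcf, hcard⟩ := exists_isRowSplit_card_range_eq_etaBar (McubicBar G)
  exact colorable_of_isRowSplit hcubic hs hcf (hcard ▸ h)

end MPP
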